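/- arXiv:2406.02603 — 3 statements merged into one kernel-verified Lean document; each statement's English description precedes it below -/
import Mathlib

section
/- Let K be a finite set (of keys) with uniform measure, P a probability distribution on a finite set V, and F : K → (V → ℝ≥0) a family of probability distributions on V satisfying F(k)(t) ∈ {0, 1} for every k and t, and (1/|K|) Σ_{k∈K} F(k)(t) = P(t) for every t ∈ V. Then (1/|K|) Σ_{k∈K} Σ_{t∈V} min(P(t), F(k)(t)) = Σ_{t∈V} P(t)². -/
/-- If `F k` is a Dirac ({0,1}-valued) distribution on `V` for each key `k`,
and `F` is distortion-free in expectation over uniform keys (averaging to `P`),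
then the expected overlap `(1/|K|) Σ_k Σ_t min (P t) (F k t)` equals `Σ_t P(t)²`. -/
theorem expected_overlap_dirac {V K : Type*} [Fintype V] [Nonempty V]
    [Fintype K] [Nonempty K]
    (P : V → ℝ) (hP0 : ∀ t, 0 ≤ P t) (hP1 : ∑ t, P t = 1)
    (F : K → V → ℝ)
    (hF01 : ∀ k t, F k t = 0 ∨ F k t = 1)
    (hFsum : ∀ k, ∑ t, F k t = 1)
    (hmean : ∀ t, (1 / (Fintype.card K : ℝ)) * ∑ k, F k t = P t) :
    (1 / (Fintype.card K : ℝ)) * ∑ k, ∑ t, min (P t) (F k t)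
      = ∑ t, (P t) ^ 2 := by
  have hP1' : ∀ t, P t ≤ 1 := by
    intro t
    calc P t ≤ ∑ s, P s := Finset.single_le_sum (fun s _ => hP0 s) (Finset.mem_univ t)
    _ = 1 := hP1
  have hmin : ∀ k t, min (P t) (F k t) = P t * F k t := by
    intro k t
    rcases hF01 k t with h | h <;> simp [h, min_eq_right (hP0 t), min_eq_left (hP1' t)]
  simp_rw [hmin]
  rw [Finset.sum_comm]
  simp_rw [← Finset.mul_sum, pow_two]
  rw [Finset.mul_sum]
  congr 1
  ext t
  rw [mul_left_comm, hmean t]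
end

section
/- With the setup of the paired-permutation overlap formula, for any A ∈ [0,1] and x ∈ [max(A-1/2,0), min(1/2,A)]: 1 ≤ 1 + 2·min(A-x, x) ≤ 1 + A, and 1 + 2·min(A-x,x) ≥ 1 + 2·max(A - 1/2, 0). Consequently, if every token probability is at most M = max_{t} P(t), the expected total variation D of the permute-reweight rule satisfies (1 - M)/2 ≤ D ≤ 1/2 - max(M - 1/2, 0). -/
/-- Pointwise bounds on the paired permute-reweight overlap `1 + 2 min (A-x) x`,
and the resulting bounds `(1 - M)/2 ≤ D ≤ 1/2 - max (M - 1/2) 0` on the expected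
total variation `D` of the permute-reweight rule, where permutations are
indexed by a finite nonempty type `P'` carrying a reversal involution `rev`,
`A π` is the straddling mass, `x π` its upper portion, `O π` the overlap, and
`M` the maximum token probability (every `A π ≤ M`, and `A π = M` whenever
`M > 1/2` since a token of mass `> 1/2` always straddles the midpoint). -/
theorem permute_reweight_bias_bounds
    {P' : Type*} [Fintype P'] [Nonempty P']
    (rev : P' → P') (hrev : Function.Involutive rev)
    (O A x : P' → ℝ) (M : ℝ) (hM0 : 0 ≤ M) (hM1 : M ≤ 1)
    (hA0 : ∀ π, 0 ≤ A π) (hA1 : ∀ π, A π ≤ 1)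
    (hAM : ∀ π, A π ≤ M) (hMstr : 1/2 < M → ∀ π, A π = M)
    (hxl : ∀ π, max (A π - 1/2) 0 ≤ x π) (hxu : ∀ π, x π ≤ min (1/2) (A π))
    (hpair : ∀ π, O π + O (rev π) = 1 + 2 * min (A π - x π) (x π))
    (D : ℝ) (hD : D = 1 - (1 / (Fintype.card P' : ℝ)) * ∑ π, O π) :
    (∀ a y : ℝ, 0 ≤ a → a ≤ 1 → max (a - 1/2) 0 ≤ y → y ≤ min (1/2) a →
        1 ≤ 1 + 2 * min (a - y) y ∧ 1 + 2 * min (a - y) y ≤ 1 + a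
          ∧ 1 + 2 * max (a - 1/2) 0 ≤ 1 + 2 * min (a - y) y)
    ∧ (1 - M) / 2 ≤ D ∧ D ≤ 1/2 - max (M - 1/2) 0 := by
  have hn : (0:ℝ) < (Fintype.card P' : ℝ) := by
    exact_mod_cast Fintype.card_pos
  -- sum over rev
  have hsum : ∑ π, O (rev π) = ∑ π, O π :=
    Function.Bijective.sum_comp hrev.bijective O
  have h2 : 2 * ∑ π, O π = ∑ π, (1 + 2 * min (A π - x π) (x π)) := by
    have : ∑ π, (O π + O (rev π)) = ∑ π, (1 + 2 * min (A π - x π) (x π)) :=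
      Finset.sum_congr rfl (fun π _ => hpair π)
    rw [Finset.sum_add_distrib, hsum] at this
    linarith
  set S : ℝ := ∑ π, min (A π - x π) (x π) with hS
  have hsplit : ∑ π, (1 + 2 * min (A π - x π) (x π))
      = (Fintype.card P' : ℝ) + 2 * S := by
    rw [Finset.sum_add_distrib, Finset.sum_const, ← Finset.mul_sum]
    simp [nsmul_eq_mul, hS]
  have hO : ∑ π, O π = (Fintype.card P' : ℝ) / 2 + S := by
    rw [hsplit] at h2; linarith
  have hDval : D = 1/2 - S / (Fintype.card P' : ℝ) := by
    rw [hD, hO]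
    field_simp
    ring
  -- pointwise bounds
  have hpt : ∀ a y : ℝ, 0 ≤ a → a ≤ 1 → max (a - 1/2) 0 ≤ y → y ≤ min (1/2) a →
      1 ≤ 1 + 2 * min (a - y) y ∧ 1 + 2 * min (a - y) y ≤ 1 + a
        ∧ 1 + 2 * max (a - 1/2) 0 ≤ 1 + 2 * min (a - y) y := by
    intro a y ha0 ha1 hyl hyu
    rw [max_le_iff] at hyl
    rw [le_min_iff] at hyu
    rcases min_cases (a - y) y with ⟨h, h'⟩ | ⟨h, h'⟩ <;>
      rcases max_cases (a - 1/2) 0 with ⟨g, g'⟩ | ⟨g, g'⟩ <;>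
      constructor <;> [skip; constructor; skip; constructor;
        skip; constructor; skip; constructor] <;> linarith [hyl.1, hyl.2, hyu.1, hyu.2]
  refine ⟨hpt, ?_, ?_⟩
  · -- D ≥ (1-M)/2 : need S ≤ n * (M/2)
    have hSle : S ≤ (Fintype.card P' : ℝ) * (M / 2) := by
      rw [hS]
      calc ∑ π, min (A π - x π) (x π) ≤ ∑ _π : P', (M / 2) := by
            apply Finset.sum_le_sum
            intro π _
            have h1 := min_le_left (A π - x π) (x π)
            have h2 := min_le_right (A π - x π) (x π)
            have := hAM π
            linarith
        _ = (Fintype.card P' : ℝ) * (M / 2) := by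
            simp [Finset.sum_const, mul_comm]
    rw [hDval]
    have : S / (Fintype.card P' : ℝ) ≤ M / 2 := by
      rw [div_le_iff₀ hn]; linarith [hSle]
    linarith
  · -- D ≤ 1/2 - max(M-1/2,0) : need S ≥ n * max(M-1/2,0)
    have hSge : (Fintype.card P' : ℝ) * max (M - 1/2) 0 ≤ S := by
      rw [hS]
      calc (Fintype.card P' : ℝ) * max (M - 1/2) 0
          = ∑ _π : P', max (M - 1/2) 0 := by simp [Finset.sum_const, mul_comm]
        _ ≤ ∑ π, min (A π - x π) (x π) := by
            apply Finset.sum_le_sum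
            intro π _
            have hx1 := hxl π
            have hx2 := hxu π
            rw [max_le_iff] at hx1
            rw [le_min_iff] at hx2
            rcases le_or_gt M (1/2) with hM | hM
            · have hme : max (M - 1/2) 0 = 0 := max_eq_right (by linarith)
              rw [hme]
              exact le_min (by linarith [hx2.2]) hx1.2
            · have hAe := hMstr hM π
              have hme : max (M - 1/2) 0 = M - 1/2 := max_eq_left (by linarith)
              rw [hme]
              rw [hAe] at hx1 hx2 ⊢
              exact le_min (by linarith [hx2.1]) (by linarith [hx1.1])
    rw [hDval]
    have : max (M - 1/2) 0 ≤ S / (Fintype.card P' : ℝ) := by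
      rw [le_div_iff₀ hn]; linarith [hSge]
    linarith
end

section
/- For β ∈ [0, 1/2], A ∈ [0,1] and x ∈ [max(A-1/2,0), min(1/2,A)]: min(A, 2(1-β)x + 2β(A-x)) + min(A, 2(1-β)(A-x) + 2βx) = A + 2x + min(2(1-β)(A - 2x), 2β(A - 2x)) ≥ min(A, 2x) + min(A, 2(A - x)). -/
/-- Paired overlap of the beta PDA-rule: for `β ∈ [0, 1/2]`, `A ∈ [0,1]` and
`x ∈ [max (A-1/2) 0, min (1/2) A]`, the paired overlap equals
`A + 2x + min (2(1-β)(A-2x)) (2β(A-2x))` and dominates the permute-reweight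
(`β = 0`) paired overlap. -/
theorem beta_paired_overlap (β A x : ℝ)
    (hβ0 : 0 ≤ β) (hβ : β ≤ 1/2)
    (hA0 : 0 ≤ A) (hA1 : A ≤ 1)
    (hxl : max (A - 1/2) 0 ≤ x) (hxu : x ≤ min (1/2) A) :
    min A (2 * (1 - β) * x + 2 * β * (A - x))
        + min A (2 * (1 - β) * (A - x) + 2 * β * x)
      = A + 2 * x + min (2 * (1 - β) * (A - 2 * x)) (2 * β * (A - 2 * x))
    ∧ A + 2 * x + min (2 * (1 - β) * (A - 2 * x)) (2 * β * (A - 2 * x))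
      ≥ min A (2 * x) + min A (2 * (A - x)) := by
  have h1 : A - 1/2 ≤ x := le_trans (le_max_left _ _) hxl
  have h2 : (0:ℝ) ≤ x := le_trans (le_max_right _ _) hxl
  have h3 : x ≤ 1/2 := le_trans hxu (min_le_left _ _)
  have h4 : x ≤ A := le_trans hxu (min_le_right _ _)
  rcases le_total (2 * x) A with h | h
  · rw [min_eq_right (by nlinarith), min_eq_left (by nlinarith),
      min_eq_right (by nlinarith : 2 * β * (A - 2 * x) ≤ 2 * (1 - β) * (A - 2 * x)),
      min_eq_right h, min_eq_left (by nlinarith)]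
    constructor <;> nlinarith
  · rw [min_eq_left (by nlinarith), min_eq_right (by nlinarith),
      min_eq_left (by nlinarith : 2 * (1 - β) * (A - 2 * x) ≤ 2 * β * (A - 2 * x)),
      min_eq_left h, min_eq_right (by nlinarith)]
    constructor <;> nlinarith
end
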